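/- (Correctness criterion for reduction variants) Let D be an N×N matrix over ZMod 2, let V be an invertible upper-triangular N×N matrix over ZMod 2 with R = D·V reduced, and let R' be any reduced N×N matrix over ZMod 2 such that rank R'[≥i,≤j] = rank D[≥i,≤j] for all 1 ≤ i, j ≤ N. Then R' has exactly the same pivot pairs as R. In other words, any reduction procedure that preserves the ranks of all submatrices D[≥i,≤j] is a valid barcode algorithm. -/

import Mathlib

/-- `i` is the pivot of column `j` of `M`: the largest row index with a nonzero entry.
(Row/column `p : Fin N` corresponds to index `p+1 ∈ {1,…,N}` of the paper.) -/
def IsLow {N : ℕ} (M : Matrix (Fin N) (Fin N) (ZMod 2)) (i j : Fin N) : Prop :=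
  M i j ≠ 0 ∧ ∀ i' : Fin N, M i' j ≠ 0 → i' ≤ i

/-- A matrix is reduced if its nonzero columns have pairwise distinct pivots. -/
def IsReducedMat {N : ℕ} (M : Matrix (Fin N) (Fin N) (ZMod 2)) : Prop :=
  ∀ i j j' : Fin N, IsLow M i j → IsLow M i j' → j = j'

/-- `rankLL M a b` is the rank of the lower-left submatrix `M[≥ a, ≤ b]` formed by the
rows with (1-based) index `≥ a` and the columns with (1-based) index `≤ b`. -/
noncomputable def rankLL {N : ℕ} (M : Matrix (Fin N) (Fin N) (ZMod 2)) (a b : ℕ) : ℕ :=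
  (Matrix.of fun (p : {p : Fin N // a ≤ (p : ℕ) + 1}) (q : {q : Fin N // (q : ℕ) + 1 ≤ b}) =>
    M p.1 q.1).rank

/-- `V` is upper-triangular. -/
def UpperTri {N : ℕ} (V : Matrix (Fin N) (Fin N) (ZMod 2)) : Prop :=
  ∀ a b : Fin N, b < a → V a b = 0

/-!
For a reduced matrix `M`, the rank of `M[≥a,≤b]` is the number of pivot pairs in that block: the
pivot columns are linearly independent there and every other column vanishes on those rows.
Hence the pivot pairs of a reduced matrix are determined by these ranks, by inclusion–exclusion
over four neighbouring blocks. Multiplying on the right by an invertible upper-triangular `V`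
multiplies each block `D[≥a,≤b]` by the invertible leading block of `V`, so `D` and `D * V`, and
by hypothesis also `R'`, have the same ranks.
-/

open Matrix Module

theorem linearIndependent_of_injective_pivot {ι α R : Type*} [Fintype ι] [LinearOrder α]
    [Ring R] [NoZeroDivisors R] {v : ι → α → R} (pivot : ι → α)
    (hinj : Function.Injective pivot) (hpivot : ∀ k, v k (pivot k) ≠ 0)
    (hbelow : ∀ k x, pivot k < x → v k x = 0) :
    LinearIndependent R v := by
  classical
  rw [Fintype.linearIndependent_iff]
  intro g hg
  by_contra! hsupp
  obtain ⟨m, hm, hmax⟩ := Finset.exists_max_image {k | g k ≠ 0} pivot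
    (by simpa [Finset.Nonempty] using hsupp)
  have hgm : g m ≠ 0 := by simpa using hm
  -- `m` has the largest pivot in the support of `g`, so at row `pivot m` only its term survives
  have hsum : ∑ k, g k * v k (pivot m) = g m * v m (pivot m) := by
    refine Finset.sum_eq_single m (fun k _ hkm => ?_) (by simp)
    by_cases hgk : g k = 0
    · simp [hgk]
    · have hlt : pivot k < pivot m :=
        (hmax k (by simpa using hgk)).lt_of_ne (hinj.ne hkm)
      simp [hbelow k _ hlt]
  have hzero : ∑ k, g k * v k (pivot m) = 0 := by
    simpa [Finset.sum_apply] using congrFun hg (pivot m)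
  exact mul_ne_zero hgm (hpivot m) (hsum ▸ hzero)

section

variable {N : ℕ}

theorem IsLow.unique_row {M : Matrix (Fin N) (Fin N) (ZMod 2)} {i i' j : Fin N}
    (h : IsLow M i j) (h' : IsLow M i' j) : i = i' :=
  le_antisymm (h'.2 i h.1) (h.2 i' h'.1)

theorem exists_isLow_of_ne_zero {M : Matrix (Fin N) (Fin N) (ZMod 2)} {p j : Fin N}
    (h : M p j ≠ 0) : ∃ i, IsLow M i j := by
  classical
  have hne : ({i | M i j ≠ 0} : Finset (Fin N)).Nonempty := ⟨p, by simpa using h⟩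
  refine ⟨_, by simpa using Finset.max'_mem _ hne, fun i' hi' => Finset.le_max' _ i' ?_⟩
  simpa using hi'

open Classical in
/-- The pivot columns of `M` inside the block `M[≥ a, ≤ b]`, indexed 1-based as in `rankLL`. -/
noncomputable def pivotCols (M : Matrix (Fin N) (Fin N) (ZMod 2)) (a b : ℕ) : Finset (Fin N) :=
  {j | (j : ℕ) < b ∧ ∃ i : Fin N, a ≤ (i : ℕ) + 1 ∧ IsLow M i j}

theorem mem_pivotCols {M : Matrix (Fin N) (Fin N) (ZMod 2)} {a b : ℕ} {j : Fin N} :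
    j ∈ pivotCols M a b ↔ (j : ℕ) < b ∧ ∃ i : Fin N, a ≤ (i : ℕ) + 1 ∧ IsLow M i j := by
  simp [pivotCols]

theorem pivotCols_antitone_left (M : Matrix (Fin N) (Fin N) (ZMod 2)) {a a' : ℕ} (b : ℕ)
    (h : a ≤ a') : pivotCols M a' b ⊆ pivotCols M a b := by
  intro j hj
  obtain ⟨hb, i, hi, hlow⟩ := mem_pivotCols.mp hj
  exact mem_pivotCols.mpr ⟨hb, i, h.trans hi, hlow⟩

theorem IsReducedMat.rankLL_eq_card_pivotCols {M : Matrix (Fin N) (Fin N) (ZMod 2)}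
    (hM : IsReducedMat M) (a b : ℕ) : rankLL M a b = (pivotCols M a b).card := by
  set A : Matrix {p : Fin N // a ≤ (p : ℕ) + 1} {q : Fin N // (q : ℕ) + 1 ≤ b} (ZMod 2) :=
    Matrix.of fun p q => M p.1 q.1
  let v : pivotCols M a b → {p : Fin N // a ≤ (p : ℕ) + 1} → ZMod 2 := fun j p => M p.1 j.1
  choose pivot hpivot_ge hpivot using fun j : pivotCols M a b => (mem_pivotCols.mp j.2).2
  have hli : LinearIndependent (ZMod 2) v := by
    refine linearIndependent_of_injective_pivot (fun j => ⟨pivot j, hpivot_ge j⟩)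
      (fun j j' h => Subtype.ext (hM _ _ _ (hpivot j) ?_)) (fun j => (hpivot j).1)
      (fun j x hx => ?_)
    · have hpiv : pivot j = pivot j' := congrArg Subtype.val h
      exact hpiv ▸ hpivot j'
    · by_contra hne
      exact absurd ((hpivot j).2 x.1 hne) (not_le.mpr hx)
  -- the columns outside `pivotCols` vanish on the rows `≥ a`, the others are the family `v`
  have hspan : Submodule.span (ZMod 2) (Set.range A.col) =
      Submodule.span (ZMod 2) (Set.range v) := by
    apply le_antisymm <;> rw [Submodule.span_le]
    · rintro _ ⟨q, rfl⟩
      by_cases hq : q.1 ∈ pivotCols M a b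
      · exact Submodule.subset_span ⟨⟨q.1, hq⟩, rfl⟩
      · suffices A.col q = 0 by simp [this]
        funext p
        by_contra hpq
        obtain ⟨i, hlow⟩ := exists_isLow_of_ne_zero hpq
        have hpi : p.1 ≤ i := hlow.2 p.1 hpq
        exact hq (mem_pivotCols.mpr ⟨q.2, i, p.2.trans (by simpa using hpi), hlow⟩)
    · rintro _ ⟨j, rfl⟩
      exact Submodule.subset_span ⟨⟨j.1, (mem_pivotCols.mp j.2).1⟩, rfl⟩
  calc rankLL M a b = finrank (ZMod 2) (Submodule.span (ZMod 2) (Set.range A.col)) :=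
        rank_eq_finrank_span_cols A
    _ = Fintype.card (pivotCols M a b) := by rw [hspan, finrank_span_eq_card hli]
    _ = (pivotCols M a b).card := Fintype.card_coe _

theorem mem_pivotCols_sdiff {M : Matrix (Fin N) (Fin N) (ZMod 2)} {i j : Fin N} {b : ℕ} :
    j ∈ pivotCols M ((i : ℕ) + 1) b \ pivotCols M ((i : ℕ) + 2) b ↔
      (j : ℕ) < b ∧ IsLow M i j := by
  simp only [Finset.mem_sdiff, mem_pivotCols]
  constructor
  · rintro ⟨⟨hb, i', hi', hlow⟩, hnot⟩
    obtain rfl : i' = i := Fin.ext (by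
      by_contra hne
      exact hnot ⟨hb, i', by omega, hlow⟩)
    exact ⟨hb, hlow⟩
  · rintro ⟨hb, hlow⟩
    refine ⟨⟨hb, i, le_rfl, hlow⟩, fun ⟨_, i', hi', hlow'⟩ => ?_⟩
    obtain rfl := hlow.unique_row hlow'
    omega

theorem card_pivotCols_ne_iff (M : Matrix (Fin N) (Fin N) (ZMod 2)) (i : Fin N) (b : ℕ) :
    (pivotCols M ((i : ℕ) + 2) b).card ≠ (pivotCols M ((i : ℕ) + 1) b).card ↔
      ∃ j : Fin N, (j : ℕ) < b ∧ IsLow M i j := by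
  have hsub := pivotCols_antitone_left M b (show (i : ℕ) + 1 ≤ (i : ℕ) + 2 by omega)
  have hex : (∃ j : Fin N, (j : ℕ) < b ∧ IsLow M i j) ↔
      (pivotCols M ((i : ℕ) + 1) b \ pivotCols M ((i : ℕ) + 2) b).Nonempty := by
    simp only [Finset.Nonempty, mem_pivotCols_sdiff]
  rw [hex, Finset.sdiff_nonempty, Ne, not_iff_not]
  exact ⟨fun h => (Finset.eq_of_subset_of_card_le hsub h.ge).symm.subset,
    fun h => congrArg Finset.card (hsub.antisymm h)⟩

theorem IsReducedMat.isLow_iff {M : Matrix (Fin N) (Fin N) (ZMod 2)} (hM : IsReducedMat M)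
    (i j : Fin N) :
    IsLow M i j ↔ (∃ j' : Fin N, (j' : ℕ) < (j : ℕ) + 1 ∧ IsLow M i j') ∧
      ¬∃ j' : Fin N, (j' : ℕ) < j ∧ IsLow M i j' := by
  refine ⟨fun h => ⟨⟨j, by omega, h⟩, fun ⟨j', hj', h'⟩ => ?_⟩, fun ⟨⟨j', hj', h'⟩, hnot⟩ => ?_⟩
  · obtain rfl := hM i j' j h' h
    omega
  · obtain rfl : j' = j := Fin.ext (by
      by_contra hne
      exact hnot ⟨j', by omega, h'⟩)
    exact h'

theorem IsReducedMat.isLow_iff_rankLL {M : Matrix (Fin N) (Fin N) (ZMod 2)}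
    (hM : IsReducedMat M) (i j : Fin N) :
    IsLow M i j ↔
      rankLL M ((i : ℕ) + 2) ((j : ℕ) + 1) ≠ rankLL M ((i : ℕ) + 1) ((j : ℕ) + 1) ∧
        rankLL M ((i : ℕ) + 2) j = rankLL M ((i : ℕ) + 1) j := by
  rw [hM.isLow_iff, ← card_pivotCols_ne_iff, ← card_pivotCols_ne_iff, not_not]
  simp only [hM.rankLL_eq_card_pivotCols]

theorem UpperTri.diag_ne_zero {V : Matrix (Fin N) (Fin N) (ZMod 2)} (hVt : UpperTri V)
    (hV : IsUnit V) (k : Fin N) : V k k ≠ 0 := by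
  have hdet : V.det ≠ 0 := ((isUnit_iff_isUnit_det V).mp hV).ne_zero
  rw [det_of_isUpperTriangular fun i j h => hVt i j h, Finset.prod_ne_zero_iff] at hdet
  exact hdet k (Finset.mem_univ k)

theorem UpperTri.rankLL_mul {V : Matrix (Fin N) (Fin N) (ZMod 2)} (hVt : UpperTri V)
    (hV : IsUnit V) (D : Matrix (Fin N) (Fin N) (ZMod 2)) (a b : ℕ) :
    rankLL (D * V) a b = rankLL D a b := by
  let W : Matrix {q : Fin N // (q : ℕ) + 1 ≤ b} {q : Fin N // (q : ℕ) + 1 ≤ b} (ZMod 2) :=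
    V.submatrix Subtype.val Subtype.val
  have hW : W.det ≠ 0 := by
    rw [det_of_isUpperTriangular fun q q' h => hVt q.1 q'.1 h, Finset.prod_ne_zero_iff]
    exact fun q _ => hVt.diag_ne_zero hV q.1
  -- `V` is upper triangular, so the first `b` columns of `D * V` only involve those of `D`
  have hprod : (D * V).submatrix (Subtype.val : {p : Fin N // a ≤ (p : ℕ) + 1} → Fin N)
      (Subtype.val : {q : Fin N // (q : ℕ) + 1 ≤ b} → Fin N) =
      D.submatrix Subtype.val Subtype.val * W := by
    ext p q
    change ∑ k, D p.1 k * V k q.1 =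
      ∑ k : {k : Fin N // (k : ℕ) + 1 ≤ b}, D p.1 k.1 * V k.1 q.1
    rw [← Finset.sum_subtype {k : Fin N | (k : ℕ) + 1 ≤ b} (by simp)
      (fun k => D p.1 k * V k q.1), Finset.sum_filter_of_ne]
    intro k _ hk
    by_contra hkb
    exact hk (by rw [hVt k q.1 (by have := q.2; rw [Fin.lt_def]; omega), mul_zero])
  exact (congrArg Matrix.rank hprod).trans (rank_mul_eq_left_of_det_ne_zero W _ hW)

theorem rankLL_eq_zero_of_lt (M : Matrix (Fin N) (Fin N) (ZMod 2)) {a : ℕ} (ha : N < a)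
    (b : ℕ) : rankLL M a b = 0 := by
  have : IsEmpty {p : Fin N // a ≤ (p : ℕ) + 1} := ⟨fun p => by omega⟩
  exact Nat.le_zero.mp ((rank_le_card_height _).trans_eq (by simp))

theorem rankLL_zero_right (M : Matrix (Fin N) (Fin N) (ZMod 2)) (a : ℕ) : rankLL M a 0 = 0 := by
  have : IsEmpty {q : Fin N // (q : ℕ) + 1 ≤ 0} := ⟨fun q => by omega⟩
  exact Nat.le_zero.mp ((rank_le_card_width _).trans_eq (by simp))

theorem rankLL_eq_of_forall_fin {M M' : Matrix (Fin N) (Fin N) (ZMod 2)}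
    (h : ∀ i j : Fin N,
      rankLL M ((i : ℕ) + 1) ((j : ℕ) + 1) = rankLL M' ((i : ℕ) + 1) ((j : ℕ) + 1))
    {a b : ℕ} (ha : 1 ≤ a) (hb : b ≤ N) : rankLL M a b = rankLL M' a b := by
  rcases lt_or_ge N a with haN | haN
  · rw [rankLL_eq_zero_of_lt M haN, rankLL_eq_zero_of_lt M' haN]
  obtain rfl | hb0 := Nat.eq_zero_or_pos b
  · rw [rankLL_zero_right, rankLL_zero_right]
  obtain ⟨i, rfl⟩ : ∃ i : Fin N, a = (i : ℕ) + 1 := ⟨⟨a - 1, by omega⟩, by simp; omega⟩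
  obtain ⟨j, rfl⟩ : ∃ j : Fin N, b = (j : ℕ) + 1 := ⟨⟨b - 1, by omega⟩, by simp; omega⟩
  exact h i j

end

/-- Correctness criterion for reduction variants: any reduced matrix `R'` that has the same
ranks of all lower-left submatrices as `D` has exactly the same pivot pairs as a matrix
`R = D * V` obtained by reducing `D` with an invertible upper-triangular `V`. -/
theorem rank_preserving_reduction_valid {N : ℕ}
    (D V R' : Matrix (Fin N) (Fin N) (ZMod 2))
    (hV : IsUnit V) (hVt : UpperTri V) (hR : IsReducedMat (D * V))
    (hR' : IsReducedMat R')
    (hrank : ∀ i j : Fin N,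
      rankLL R' ((i : ℕ) + 1) ((j : ℕ) + 1) = rankLL D ((i : ℕ) + 1) ((j : ℕ) + 1)) :
    ∀ i j : Fin N, IsLow R' i j ↔ IsLow (D * V) i j := by
  intro i j
  have hsame {a b : ℕ} (ha : 1 ≤ a) (hb : b ≤ N) : rankLL R' a b = rankLL (D * V) a b :=
    rankLL_eq_of_forall_fin (fun i j => (hrank i j).trans (hVt.rankLL_mul hV D _ _).symm) ha hb
  have hj := j.isLt
  rw [hR'.isLow_iff_rankLL, hR.isLow_iff_rankLL, hsame, hsame, hsame, hsame] <;> omega
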